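/- For every Y < 0 and K ∈ ℝⁿ, taking u = K·Y (so Y' = (s+P'K)·Y), the random variables m and q are integrable and E[q] − (E[m])² + γ⁻Y·E[m] = Y²·F⁻(K). -/

import Mathlib

open MeasureTheory

/-- The function `F⁻` from the paper, written with expectations as Bochner integrals. -/
noncomputable def Fminus {Ω : Type*} [MeasurableSpace Ω] (ℙ : Measure Ω) {n : ℕ}
    (P : Ω → EuclideanSpace ℝ (Fin n)) (s ρ' γm ap am bp bm : ℝ)
    (K : EuclideanSpace ℝ (Fin n)) : ℝ :=
  let pk : Ω → ℝ := fun ω => inner ℝ (P ω) K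
  let A : ℝ :=
    (∫ ω, ap * (s + pk ω) * (if s + pk ω ≤ 0 then (1:ℝ) else 0) ∂ℙ) +
    (∫ ω, am * (s + pk ω) * (if 0 < s + pk ω then (1:ℝ) else 0) ∂ℙ)
  ρ' ^ 2 * ((∫ ω, (pk ω) ^ 2 ∂ℙ) - (∫ ω, pk ω ∂ℙ) ^ 2) +
  (∫ ω, (2 * ρ' * ap + bp) * (s + pk ω) ^ 2 * (if s + pk ω ≤ 0 then (1:ℝ) else 0) ∂ℙ) +
  (∫ ω, (2 * ρ' * am + bm) * (s + pk ω) ^ 2 * (if 0 < s + pk ω then (1:ℝ) else 0) ∂ℙ) -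
  A ^ 2 - 2 * ρ' * A * (s + ∫ ω, pk ω ∂ℙ) + γm * A +
  ρ' * γm * (s + ∫ ω, pk ω ∂ℙ)

/-- The random variable `m = ρ'Y' + a⁺Y'·1{Y' ≥ 0} + a⁻Y'·1{Y' < 0}`,
where `Y' = sY + P'u`. -/
noncomputable def mRV {Ω : Type*} {n : ℕ} (P : Ω → EuclideanSpace ℝ (Fin n))
    (s ρ' ap am : ℝ) (Y : ℝ) (u : EuclideanSpace ℝ (Fin n)) (ω : Ω) : ℝ :=
  let Y' : ℝ := s * Y + inner ℝ (P ω) u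
  ρ' * Y' + ap * Y' * (if 0 ≤ Y' then (1:ℝ) else 0) +
    am * Y' * (if Y' < 0 then (1:ℝ) else 0)

/-- The random variable `q = ρ'²Y'² + (2ρ'a⁺+b⁺)Y'²·1{Y' ≥ 0} + (2ρ'a⁻+b⁻)Y'²·1{Y' < 0}`,
where `Y' = sY + P'u`. -/
noncomputable def qRV {Ω : Type*} {n : ℕ} (P : Ω → EuclideanSpace ℝ (Fin n))
    (s ρ' ap am bp bm : ℝ) (Y : ℝ) (u : EuclideanSpace ℝ (Fin n)) (ω : Ω) : ℝ :=
  let Y' : ℝ := s * Y + inner ℝ (P ω) u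
  ρ' ^ 2 * Y' ^ 2 + (2 * ρ' * ap + bp) * Y' ^ 2 * (if 0 ≤ Y' then (1:ℝ) else 0) +
    (2 * ρ' * am + bm) * Y' ^ 2 * (if Y' < 0 then (1:ℝ) else 0)

/-!
Since `Y < 0`, the sign of `Y' = Y·(s + P'K)` is opposite to that of `s + P'K`, so `m = Y·m₀` and
`q = Y²·q₀` where `m₀, q₀` carry the indicators of `s + P'K ≤ 0` and `s + P'K > 0` appearing in
`F⁻`. Both are integrable because `P'K ∈ L²`, and expanding `E[q₀] − E[m₀]²` by linearity, the
`ρ'²` terms combine into `ρ'²·Var(P'K)` via `E[(s + P'K)²] = s² + 2s·E[P'K] + E[(P'K)²]`.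
-/

namespace MeasureTheory

variable {Ω : Type*} [MeasurableSpace Ω] {ℙ : Measure Ω} {f g : Ω → ℝ}

lemma Integrable.const_mul_mul_ite (hg : Integrable g ℙ) (c : ℝ) {p : Ω → Prop}
    [DecidablePred p] (hp : MeasurableSet {ω | p ω}) :
    Integrable (fun ω => c * g ω * (if p ω then (1:ℝ) else 0)) ℙ := by
  have h : (fun ω => c * g ω * (if p ω then (1:ℝ) else 0)) =
      {ω | p ω}.indicator (fun ω => c * g ω) := by
    ext ω
    simp [Set.indicator_apply]
  rw [h]
  exact (hg.const_mul c).indicator hp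

lemma Integrable.split_sign (hg : Integrable g ℙ) (hf : Measurable f) (c cn cp : ℝ) :
    Integrable (fun ω => c * g ω + cn * g ω * (if f ω ≤ 0 then (1:ℝ) else 0) +
      cp * g ω * (if 0 < f ω then (1:ℝ) else 0)) ℙ :=
  ((hg.const_mul c).add
    (hg.const_mul_mul_ite cn (measurableSet_le hf measurable_const))).add
    (hg.const_mul_mul_ite cp (measurableSet_lt measurable_const hf))

lemma integral_split_sign (hg : Integrable g ℙ) (hf : Measurable f) (c cn cp : ℝ) :
    ∫ ω, c * g ω + cn * g ω * (if f ω ≤ 0 then (1:ℝ) else 0) +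
      cp * g ω * (if 0 < f ω then (1:ℝ) else 0) ∂ℙ =
    c * ∫ ω, g ω ∂ℙ + ∫ ω, cn * g ω * (if f ω ≤ 0 then (1:ℝ) else 0) ∂ℙ +
      ∫ ω, cp * g ω * (if 0 < f ω then (1:ℝ) else 0) ∂ℙ := by
  have hn : Integrable (fun ω => cn * g ω * (if f ω ≤ 0 then (1:ℝ) else 0)) ℙ :=
    hg.const_mul_mul_ite cn (measurableSet_le hf measurable_const)
  have hp : Integrable (fun ω => cp * g ω * (if 0 < f ω then (1:ℝ) else 0)) ℙ :=
    hg.const_mul_mul_ite cp (measurableSet_lt measurable_const hf)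
  have hcn : Integrable (fun ω => c * g ω + cn * g ω * (if f ω ≤ 0 then (1:ℝ) else 0)) ℙ :=
    (hg.const_mul c).add hn
  rw [integral_add hcn hp, integral_add (hg.const_mul c) hn,
    integral_const_mul]

variable [IsProbabilityMeasure ℙ]

lemma integral_const_add (hg : Integrable g ℙ) (s : ℝ) :
    ∫ ω, s + g ω ∂ℙ = s + ∫ ω, g ω ∂ℙ := by
  rw [integral_add (integrable_const s) hg, integral_const, probReal_univ, one_smul]

lemma integral_const_add_sq (hg : MemLp g 2 ℙ) (s : ℝ) :
    ∫ ω, (s + g ω) ^ 2 ∂ℙ = s ^ 2 + 2 * s * ∫ ω, g ω ∂ℙ + ∫ ω, g ω ^ 2 ∂ℙ := by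
  have hg1 : Integrable g ℙ := hg.integrable one_le_two
  have hlin : Integrable (fun ω => 2 * s * g ω + g ω ^ 2) ℙ :=
    (hg1.const_mul _).add hg.integrable_sq
  calc ∫ ω, (s + g ω) ^ 2 ∂ℙ = ∫ ω, s ^ 2 + (2 * s * g ω + g ω ^ 2) ∂ℙ := by
        congr 1; ext ω; ring
    _ = _ := by
        rw [integral_const_add hlin,
          integral_add (hg1.const_mul _) hg.integrable_sq, integral_const_mul, add_assoc]

end MeasureTheory

section SignFlip

variable {Y : ℝ}

lemma ite_nonneg_mul_of_neg (hY : Y < 0) (x : ℝ) :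
    (if 0 ≤ Y * x then (1:ℝ) else 0) = if x ≤ 0 then 1 else 0 := by
  have h : Y * x < 0 ↔ 0 < x := by simpa using smul_neg_iff_of_neg_left (β := ℝ) hY
  rw [if_congr (by rw [← not_lt, h, not_lt]) rfl rfl]

lemma ite_mul_neg_of_neg (hY : Y < 0) (x : ℝ) :
    (if Y * x < 0 then (1:ℝ) else 0) = if 0 < x then 1 else 0 := by
  rw [if_congr (by simpa using smul_neg_iff_of_neg_left (β := ℝ) hY) rfl rfl]

variable {Ω : Type*} {n : ℕ} {P : Ω → EuclideanSpace ℝ (Fin n)} {K : EuclideanSpace ℝ (Fin n)}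
  {s ρ' ap am bp bm : ℝ}

lemma const_mul_add_inner_smul (ω : Ω) :
    s * Y + inner ℝ (P ω) (Y • K) = Y * (s + inner ℝ (P ω) K) := by
  rw [real_inner_smul_right]
  ring

lemma mRV_smul_of_neg (hY : Y < 0) (ω : Ω) :
    mRV P s ρ' ap am Y (Y • K) ω =
      Y * (ρ' * (s + inner ℝ (P ω) K) +
        ap * (s + inner ℝ (P ω) K) * (if s + inner ℝ (P ω) K ≤ 0 then (1:ℝ) else 0) +
        am * (s + inner ℝ (P ω) K) * (if 0 < s + inner ℝ (P ω) K then (1:ℝ) else 0)) := by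
  simp only [mRV, const_mul_add_inner_smul, ite_nonneg_mul_of_neg hY, ite_mul_neg_of_neg hY]
  ring

lemma qRV_smul_of_neg (hY : Y < 0) (ω : Ω) :
    qRV P s ρ' ap am bp bm Y (Y • K) ω =
      Y ^ 2 * (ρ' ^ 2 * (s + inner ℝ (P ω) K) ^ 2 +
        (2 * ρ' * ap + bp) * (s + inner ℝ (P ω) K) ^ 2 *
          (if s + inner ℝ (P ω) K ≤ 0 then (1:ℝ) else 0) +
        (2 * ρ' * am + bm) * (s + inner ℝ (P ω) K) ^ 2 *
          (if 0 < s + inner ℝ (P ω) K then (1:ℝ) else 0)) := by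
  simp only [qRV, const_mul_add_inner_smul, ite_nonneg_mul_of_neg hY, ite_mul_neg_of_neg hY]
  ring

end SignFlip

theorem cost_functional_eq_Fminus_general {Ω : Type*} [MeasurableSpace Ω] (ℙ : Measure Ω)
    [IsProbabilityMeasure ℙ] {n : ℕ}
    (P : Ω → EuclideanSpace ℝ (Fin n)) (hmeas : Measurable P)
    (hL2 : Integrable (fun ω => ‖P ω‖ ^ 2) ℙ)
    (s ρ' γm ap am bp bm : ℝ) :
    ∀ Y : ℝ, Y < 0 → ∀ K : EuclideanSpace ℝ (Fin n),
      Integrable (fun ω => mRV P s ρ' ap am Y (Y • K) ω) ℙ ∧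
      Integrable (fun ω => qRV P s ρ' ap am bp bm Y (Y • K) ω) ℙ ∧
      (∫ ω, qRV P s ρ' ap am bp bm Y (Y • K) ω ∂ℙ) -
        (∫ ω, mRV P s ρ' ap am Y (Y • K) ω ∂ℙ) ^ 2 +
        γm * Y * (∫ ω, mRV P s ρ' ap am Y (Y • K) ω ∂ℙ) =
      Y ^ 2 * Fminus ℙ P s ρ' γm ap am bp bm K := by
  intro Y hY K
  have hPK : MemLp (fun ω => inner ℝ (P ω) K) 2 ℙ :=
    ((memLp_two_iff_integrable_sq_norm hmeas.aestronglyMeasurable).2 hL2).inner_const K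
  have hf : MemLp (fun ω => s + inner ℝ (P ω) K) 2 ℙ := (memLp_const s).add hPK
  have hfm : Measurable fun ω => s + inner ℝ (P ω) K := measurable_const.add
    (hmeas.inner measurable_const)
  have hm := (hf.integrable one_le_two).split_sign hfm ρ' ap am
  have hq := hf.integrable_sq.split_sign hfm (ρ' ^ 2) (2 * ρ' * ap + bp) (2 * ρ' * am + bm)
  simp only [mRV_smul_of_neg hY, qRV_smul_of_neg hY]
  refine ⟨hm.const_mul Y, hq.const_mul (Y ^ 2), ?_⟩
  rw [integral_const_mul, integral_const_mul,
    integral_split_sign (hf.integrable one_le_two) hfm,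
    integral_split_sign hf.integrable_sq hfm,
    integral_const_add (hPK.integrable one_le_two), integral_const_add_sq hPK, Fminus]
  ring

/-- For `Y < 0` and `u = K·Y` (so `Y' = (s+P'K)·Y`), the random variables `m` and `q`
are integrable and `E[q] − (E[m])² + γ⁻Y·E[m] = Y²·F⁻(K)`. -/
theorem cost_functional_eq_Fminus {Ω : Type*} [MeasurableSpace Ω] (ℙ : Measure Ω)
    [IsProbabilityMeasure ℙ] {n : ℕ} (hn : 1 ≤ n)
    (P : Ω → EuclideanSpace ℝ (Fin n)) (hmeas : Measurable P)
    (hL2 : Integrable (fun ω => ‖P ω‖ ^ 2) ℙ)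
    (s ρ' γm ap am bp bm : ℝ) (hs : 0 < s) (hρ : 0 < ρ') :
    ∀ Y : ℝ, Y < 0 → ∀ K : EuclideanSpace ℝ (Fin n),
      Integrable (fun ω => mRV P s ρ' ap am Y (Y • K) ω) ℙ ∧
      Integrable (fun ω => qRV P s ρ' ap am bp bm Y (Y • K) ω) ℙ ∧
      (∫ ω, qRV P s ρ' ap am bp bm Y (Y • K) ω ∂ℙ) -
        (∫ ω, mRV P s ρ' ap am Y (Y • K) ω ∂ℙ) ^ 2 +
        γm * Y * (∫ ω, mRV P s ρ' ap am Y (Y • K) ω ∂ℙ) =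
      Y ^ 2 * Fminus ℙ P s ρ' γm ap am bp bm K :=
  cost_functional_eq_Fminus_general ℙ P hmeas hL2 s ρ' γm ap am bp bm
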